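/- arXiv:1902.07162 — 4 statements merged into one kernel-verified Lean document; each statement's English description precedes it below -/
import Mathlib

section
/- For all natural numbers n, m and all a, b, c, λ in [0,1]: min(a, b ⊕ n·(c ⊙ λ)) ≤ max(a ⊙ (c ⊕ λ)^m, b), where x ⊕ y = min(x+y,1), x ⊙ y = max(x+y-1,0), n·x denotes the n-fold ⊕-sum of x, and y^m denotes the m-fold ⊙-product of y. -/
open Set

noncomputable def oplus (a b : ℝ) : ℝ := min (a + b) 1

noncomputable def odot (a b : ℝ) : ℝ := max (a + b - 1) 0

/-- `n`-fold truncated sum `x ⊕ ⋯ ⊕ x` (`0` when `n = 0`). -/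
noncomputable def nOplus : ℕ → ℝ → ℝ
  | 0, _ => 0
  | n + 1, x => oplus x (nOplus n x)

/-- `m`-fold truncated product `y ⊙ ⋯ ⊙ y` (`1` when `m = 0`). -/
noncomputable def nOdot : ℕ → ℝ → ℝ
  | 0, _ => 1
  | m + 1, y => odot y (nOdot m y)

/-! Either `c + l ≥ 1`, so that `c ⊕ l = 1` and `a ⊙ (c ⊕ l)^m = a`, or `c + l ≤ 1`, so that
`c ⊙ l = 0` and `b ⊕ n·(c ⊙ l) = b`; in both cases one side of the inequality collapses. -/

lemma oplus_eq_one_of_one_le_add {a b : ℝ} (h : 1 ≤ a + b) : oplus a b = 1 :=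
  min_eq_right h

lemma odot_eq_zero_of_add_le_one {a b : ℝ} (h : a + b ≤ 1) : odot a b = 0 :=
  max_eq_right (by linarith)

lemma oplus_zero_right {a : ℝ} (h : a ≤ 1) : oplus a 0 = a := by
  simp [oplus, h]

lemma odot_one_right {a : ℝ} (h : 0 ≤ a) : odot a 1 = a := by
  simp [odot, h]

lemma nOplus_zero (n : ℕ) : nOplus n 0 = 0 := by
  induction n with
  | zero => rfl
  | succ n ih => rw [nOplus, ih, oplus_zero_right zero_le_one]

lemma nOdot_one (m : ℕ) : nOdot m 1 = 1 := by
  induction m with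
  | zero => rfl
  | succ m ih => rw [nOdot, ih, odot_one_right zero_le_one]

theorem min_oplus_le_max_odot_general (n m : ℕ) (a b c l : ℝ)
    (ha : a ∈ Icc (0:ℝ) 1) (hb : b ∈ Icc (0:ℝ) 1) :
    min a (oplus b (nOplus n (odot c l))) ≤ max (odot a (nOdot m (oplus c l))) b := by
  rcases le_total 1 (c + l) with hcl | hcl
  · rw [oplus_eq_one_of_one_le_add hcl, nOdot_one, odot_one_right ha.1]
    exact le_max_of_le_left (min_le_left _ _)
  · rw [odot_eq_zero_of_add_le_one hcl, nOplus_zero, oplus_zero_right hb.2]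
    exact le_max_of_le_right (min_le_right _ _)

theorem min_oplus_le_max_odot (n m : ℕ) (a b c l : ℝ)
    (ha : a ∈ Icc (0:ℝ) 1) (hb : b ∈ Icc (0:ℝ) 1) (hc : c ∈ Icc (0:ℝ) 1)
    (hl : l ∈ Icc (0:ℝ) 1) :
    min a (oplus b (nOplus n (odot c l))) ≤ max (odot a (nOdot m (oplus c l))) b :=
  min_oplus_le_max_odot_general n m a b c l ha hb
end

section
/- With ρ_n defined by ρ_0(x_0) = x_0 and ρ_{n+1}(x_0,…,x_{n+1}) = min(max(x_0,…,x_{n+1}), min(ρ_n(x_0,…,x_n) + 1/2^n, 1)): if (x_n) is a sequence in [0,1] satisfying x_n ≤ x_{n+1} ≤ min(x_n + 1/2^n, 1) for all n (an HNN-Cauchy sequence), then ρ_n(x_0,…,x_n) = x_n for every n. -/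
open Set

noncomputable def pmax : ℕ → (ℕ → ℝ) → ℝ
  | 0, x => x 0
  | n + 1, x => max (pmax n x) (x (n + 1))

noncomputable def rho : ℕ → (ℕ → ℝ) → ℝ
  | 0, x => x 0
  | n + 1, x => min (pmax (n + 1) x) (min (rho n x + (1 / 2) ^ n) 1)

theorem pmax_eq_of_monotone {x : ℕ → ℝ} (hx : Monotone x) (n : ℕ) : pmax n x = x n := by
  induction n with
  | zero => rfl
  | succ n ih => rw [pmax, ih, max_eq_right (hx n.le_succ)]

theorem rho_of_hnn_cauchy_general (x : ℕ → ℝ)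
    (hHNN : ∀ n, x n ≤ x (n + 1) ∧ x (n + 1) ≤ min (x n + (1 / 2) ^ n) 1) :
    ∀ n, rho n x = x n := by
  have hmono : Monotone x := monotone_nat_of_le_succ fun n => (hHNN n).1
  intro n
  induction n with
  | zero => rfl
  | succ n ih => rw [rho, ih, pmax_eq_of_monotone hmono, min_eq_left (hHNN n).2]

theorem rho_of_hnn_cauchy (x : ℕ → ℝ) (hx : ∀ n, x n ∈ Icc (0:ℝ) 1)
    (hHNN : ∀ n, x n ≤ x (n + 1) ∧ x (n + 1) ≤ min (x n + (1 / 2) ^ n) 1) :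
    ∀ n, rho n x = x n :=
  rho_of_hnn_cauchy_general x hHNN
end

section
/- Define δ : [0,1]^ℕ → [0,1] by δ((x_n)) := lim_{n→∞} ρ_n(x_0,…,x_n), where ρ_0(x_0) = x_0 and ρ_{n+1}(x_0,…,x_{n+1}) = min(max(x_0,…,x_{n+1}), min(ρ_n(x_0,…,x_n) + 1/2^n, 1)). This limit exists for every sequence, δ is monotone (with respect to the pointwise order on [0,1]^ℕ) and continuous (with respect to the product topology), and satisfies δ(x,x,x,…) = x as well as ρ_n(x_0,…,x_n) ≤ δ((x_k)) ≤ min(ρ_n(x_0,…,x_n) + 1/2^{n-1}, 1) for every n. -/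
open Set Filter

/-- `δ((x_n)) = lim_n ρ_n(x_0,…,x_n)`; since the sequence `(ρ_n x)_n` is increasing and
bounded, its limit equals its supremum. -/
noncomputable def delta (x : ℕ → ℝ) : ℝ := ⨆ n, rho n x

/-! As soon as `x 0 ≤ 1`, the sequence `n ↦ ρ_n x` is increasing, bounded by `1`, and its
`n`-th increment is at most `2⁻ⁿ`; hence it converges to `δ x` with error at most `2¹⁻ⁿ`,
uniformly in `x`. Each `ρ_n` is continuous and monotone, and both properties pass to the
(uniform) limit. -/

theorem continuous_pmax : ∀ n, Continuous (pmax n)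
  | 0 => continuous_apply 0
  | n + 1 => (continuous_pmax n).max (continuous_apply (n + 1))

theorem monotone_pmax : ∀ n, Monotone (pmax n)
  | 0 => fun _ _ h => h 0
  | n + 1 => fun _ _ h => max_le_max (monotone_pmax n h) (h (n + 1))

theorem pmax_mono_index (x : ℕ → ℝ) : Monotone fun n => pmax n x :=
  monotone_nat_of_le_succ fun _ => le_max_left _ _

theorem pmax_const (c : ℝ) : ∀ n, pmax n (fun _ => c) = c
  | 0 => rfl
  | n + 1 => by rw [pmax, pmax_const c n, max_self]

section Rho

variable {x : ℕ → ℝ}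

theorem continuous_rho : ∀ n, Continuous (rho n)
  | 0 => continuous_apply 0
  | n + 1 => (continuous_pmax (n + 1)).min
      (((continuous_rho n).add continuous_const).min continuous_const)

theorem monotone_rho : ∀ n, Monotone (rho n)
  | 0 => fun _ _ h => h 0
  | n + 1 => fun _ _ h => min_le_min (monotone_pmax (n + 1) h)
      (min_le_min (add_le_add_left (monotone_rho n h) _) le_rfl)

theorem rho_le_pmax (x : ℕ → ℝ) : ∀ n, rho n x ≤ pmax n x
  | 0 => le_rfl
  | _ + 1 => min_le_left _ _

theorem rho_le_one (hx : x 0 ≤ 1) : ∀ n, rho n x ≤ 1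
  | 0 => hx
  | _ + 1 => (min_le_right _ _).trans (min_le_right _ _)

theorem rho_succ_le (x : ℕ → ℝ) (n : ℕ) : rho (n + 1) x ≤ rho n x + (1 / 2) ^ n :=
  (min_le_right _ _).trans (min_le_left _ _)

theorem rho_mono_index (hx : x 0 ≤ 1) : Monotone fun n => rho n x := by
  refine monotone_nat_of_le_succ fun n => le_min ?_ (le_min ?_ (rho_le_one hx n))
  · exact (rho_le_pmax x n).trans (pmax_mono_index x n.le_succ)
  · exact le_add_of_nonneg_right (by positivity)

/-- Telescoping the increments `2⁻ⁱ`, written so that the induction step is linear. -/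
theorem rho_add_le (x : ℕ → ℝ) (n : ℕ) :
    ∀ k, rho (n + k) x ≤ rho n x + 2 * (1 / 2) ^ n - 2 * (1 / 2 : ℝ) ^ (n + k)
  | 0 => by simp
  | k + 1 => by
    have hstep := rho_succ_le x (n + k)
    have hpow : (1 / 2 : ℝ) ^ (n + k + 1) = (1 / 2) ^ (n + k) / 2 := by
      rw [pow_succ]; ring
    rw [← add_assoc, hpow]
    linarith [rho_add_le x n k]

theorem rho_const {c : ℝ} (hc : c ≤ 1) : ∀ n, rho n (fun _ => c) = c
  | 0 => rfl
  | n + 1 => by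
    rw [rho, pmax_const, rho_const hc n]
    exact min_eq_left (le_min (le_add_of_nonneg_right (by positivity)) hc)

end Rho

section Delta

variable {x : ℕ → ℝ}

theorem bddAbove_range_rho (hx : x 0 ≤ 1) : BddAbove (range fun n => rho n x) :=
  ⟨1, forall_mem_range.2 (rho_le_one hx)⟩

theorem tendsto_rho_delta (hx : x 0 ≤ 1) :
    Tendsto (fun n => rho n x) atTop (nhds (delta x)) :=
  tendsto_atTop_ciSup (rho_mono_index hx) (bddAbove_range_rho hx)

theorem rho_le_delta (hx : x 0 ≤ 1) (n : ℕ) : rho n x ≤ delta x :=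
  le_ciSup (bddAbove_range_rho hx) n

theorem delta_le_one (hx : x 0 ≤ 1) : delta x ≤ 1 :=
  ciSup_le (rho_le_one hx)

theorem delta_le_rho_add (hx : x 0 ≤ 1) (n : ℕ) : delta x ≤ rho n x + 2 * (1 / 2) ^ n :=
  ciSup_le fun m => calc
    rho m x ≤ rho (n + m) x := rho_mono_index hx (Nat.le_add_left m n)
    _ ≤ rho n x + 2 * (1 / 2) ^ n - 2 * (1 / 2 : ℝ) ^ (n + m) := rho_add_le x n m
    _ ≤ rho n x + 2 * (1 / 2) ^ n := sub_le_self _ (by positivity)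

theorem delta_mono {y : ℕ → ℝ} (hy : y 0 ≤ 1) (hxy : x ≤ y) : delta x ≤ delta y :=
  ciSup_le fun n => (monotone_rho n hxy).trans (rho_le_delta hy n)

theorem tendstoUniformlyOn_rho_delta :
    TendstoUniformlyOn rho delta atTop {x : ℕ → ℝ | x 0 ≤ 1} := by
  rw [Metric.tendstoUniformlyOn_iff]
  intro ε hε
  have hbound : Tendsto (fun n : ℕ => 2 * (1 / 2 : ℝ) ^ n) atTop (nhds 0) := by
    simpa using (tendsto_pow_atTop_nhds_zero_of_lt_one (by norm_num : (0 : ℝ) ≤ 1 / 2)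
      (by norm_num)).const_mul 2
  filter_upwards [hbound.eventually (gt_mem_nhds hε)] with n hn x hx
  rw [Real.dist_eq, abs_of_nonneg (sub_nonneg.2 (rho_le_delta hx n))]
  linarith [delta_le_rho_add hx n]

theorem continuousOn_delta : ContinuousOn delta {x : ℕ → ℝ | x 0 ≤ 1} :=
  tendstoUniformlyOn_rho_delta.continuousOn
    (Frequently.of_forall fun n => (continuous_rho n).continuousOn)

theorem delta_const {c : ℝ} (hc : c ≤ 1) : delta (fun _ => c) = c := by
  simp only [delta, rho_const hc, ciSup_const]

end Delta

theorem delta_properties :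
    (∀ x : ℕ → ℝ, (∀ n, x n ∈ Icc (0:ℝ) 1) →
      Tendsto (fun n => rho n x) atTop (nhds (delta x))) ∧
    (∀ x y : ℕ → ℝ, (∀ n, x n ∈ Icc (0:ℝ) 1) → (∀ n, y n ∈ Icc (0:ℝ) 1) →
      (∀ n, x n ≤ y n) → delta x ≤ delta y) ∧
    ContinuousOn delta {x : ℕ → ℝ | ∀ n, x n ∈ Icc (0:ℝ) 1} ∧
    (∀ c ∈ Icc (0:ℝ) 1, delta (fun _ => c) = c) ∧
    (∀ x : ℕ → ℝ, (∀ n, x n ∈ Icc (0:ℝ) 1) → ∀ n,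
      rho n x ≤ delta x ∧ delta x ≤ min (rho n x + 2 * (1 / 2) ^ n) 1) :=
  ⟨fun _ hx => tendsto_rho_delta (hx 0).2,
    fun _ _ _ hy hxy => delta_mono (hy 0).2 hxy,
    continuousOn_delta.mono fun _ hx => (hx 0).2,
    fun _ hc => delta_const hc.2,
    fun _ hx n => ⟨rho_le_delta (hx 0).2 n,
      le_min (delta_le_rho_add (hx 0).2 n) (delta_le_one (hx 0).2)⟩⟩
end

section
/- Let X be a compact topological space equipped with a preorder, and let L be a set of monotone continuous functions X → [0,1] closed under pointwise max, min, truncated addition ⊕, truncated product ⊙, and containing all constants, such that whenever x ≱ y there exists φ ∈ L with φ(x) < φ(y). Then L is dense in the set of all monotone continuous functions X → [0,1] with respect to the sup metric: for every monotone continuous ψ : X → [0,1] and every ε > 0 there exists φ ∈ L with sup_{x∈X} |ψ(x) − φ(x)| ≤ ε. -/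
open Set

/-!
Shifting a separating function `φ`, `φ x < φ y`, by `⊙ (1 - φ x)` makes it vanish at `x` and stay
positive at `y`; adding it to itself with `⊕` often enough makes it `1` at `y`. For such `χ`,
`min (ψ y) (ψ x ⊕ χ)` is `≤ ψ` at `x` and `≥ ψ` at `y`; when `ψ y ≤ ψ x` the constant `ψ y` does
this, and monotonicity of `ψ` shows that otherwise `¬ y ≤ x`, so that such a `χ` exists. These
two-point approximations are all the Kakutani argument (a finite sup over one compact cover, then
a finite inf over another) needs to approximate `ψ` uniformly.
-/

theorem odot_one_sub_self (a : ℝ) : odot a (1 - a) = 0 := by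
  simp [odot]

theorem odot_one_sub_of_le {a b : ℝ} (h : a ≤ b) : odot b (1 - a) = b - a := by
  rw [odot, max_eq_left] <;> linarith

theorem oplus_min_mul_one {t : ℝ} (ht : 0 ≤ t) (n : ℕ) :
    oplus (min (n * t) 1) t = min ((n + 1) * t) 1 := by
  rcases le_total ((n : ℝ) * t) 1 with h | h
  · rw [min_eq_left h, oplus, add_one_mul]
  · rw [min_eq_right h, oplus, min_eq_right (by linarith), min_eq_right (by nlinarith)]

theorem exists_finset_forall_exists_lt {X : Type*} [TopologicalSpace X] [CompactSpace X]
    {u v : X → X → ℝ} (hu : ∀ y, Continuous (u y)) (hv : ∀ y, Continuous (v y))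
    (h : ∀ z, u z z < v z z) : ∃ t : Finset X, ∀ z, ∃ y ∈ t, u y z < v y z := by
  obtain ⟨t, ht⟩ := CompactSpace.elim_nhds_subcover (fun y => {z | u y z < v y z})
    fun z => (isOpen_lt (hu z) (hv z)).mem_nhds (h z)
  refine ⟨t, fun z => ?_⟩
  simpa using ht.ge (mem_univ z)

section OrderedStoneWeierstrass

variable {X : Type*} {L : Set (X → ℝ)}

theorem exists_mem_apply_eq_zero_apply_eq_min_mul
    (hoplus : ∀ f ∈ L, ∀ g ∈ L, (fun x => oplus (f x) (g x)) ∈ L)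
    (hconst : ∀ c ∈ Icc (0:ℝ) 1, (fun _ : X => c) ∈ L)
    {f : X → ℝ} (hf : f ∈ L) {x y : X} (hfx : f x = 0) (hfy : 0 ≤ f y) (n : ℕ) :
    ∃ g ∈ L, g x = 0 ∧ g y = min (n * f y) 1 := by
  induction n with
  | zero => exact ⟨_, hconst 0 ⟨le_rfl, zero_le_one⟩, rfl, by simp⟩
  | succ n ih =>
    obtain ⟨g, hg, hgx, hgy⟩ := ih
    refine ⟨_, hoplus g hg f hf, by simp [hgx, hfx, oplus], ?_⟩
    simp only [hgy, oplus_min_mul_one hfy, Nat.cast_succ]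

theorem exists_mem_apply_eq_zero_apply_eq_one
    (hrange : ∀ f ∈ L, ∀ x, f x ∈ Icc (0:ℝ) 1)
    (hoplus : ∀ f ∈ L, ∀ g ∈ L, (fun x => oplus (f x) (g x)) ∈ L)
    (hodot : ∀ f ∈ L, ∀ g ∈ L, (fun x => odot (f x) (g x)) ∈ L)
    (hconst : ∀ c ∈ Icc (0:ℝ) 1, (fun _ : X => c) ∈ L)
    {φ : X → ℝ} (hφ : φ ∈ L) {x y : X} (hlt : φ x < φ y) :
    ∃ χ ∈ L, χ x = 0 ∧ χ y = 1 := by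
  have hφx := hrange φ hφ x
  have hshift : (fun z => odot (φ z) (1 - φ x)) ∈ L :=
    hodot φ hφ _ (hconst _ ⟨by linarith [hφx.2], by linarith [hφx.1]⟩)
  have hδ : 0 < φ y - φ x := sub_pos.2 hlt
  obtain ⟨n, hn⟩ := exists_nat_ge (φ y - φ x)⁻¹
  obtain ⟨χ, hχ, hχx, hχy⟩ := exists_mem_apply_eq_zero_apply_eq_min_mul hoplus hconst hshift
    (odot_one_sub_self (φ x)) ((odot_one_sub_of_le hlt.le).symm ▸ hδ.le) n
  refine ⟨χ, hχ, hχx, ?_⟩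
  rw [hχy, odot_one_sub_of_le hlt.le, min_eq_right ((inv_le_iff_one_le_mul₀ hδ).1 hn)]

theorem exists_mem_apply_le_and_le_apply_of_monotone [Preorder X]
    (hmin : ∀ f ∈ L, ∀ g ∈ L, (fun x => min (f x) (g x)) ∈ L)
    (hoplus : ∀ f ∈ L, ∀ g ∈ L, (fun x => oplus (f x) (g x)) ∈ L)
    (hconst : ∀ c ∈ Icc (0:ℝ) 1, (fun _ : X => c) ∈ L)
    (hind : ∀ x y : X, ¬ y ≤ x → ∃ χ ∈ L, χ x = 0 ∧ χ y = 1)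
    {ψ : X → ℝ} (hψ : Monotone ψ) (hψr : ∀ x, ψ x ∈ Icc (0:ℝ) 1) (x y : X) :
    ∃ g ∈ L, g x ≤ ψ x ∧ ψ y ≤ g y := by
  by_cases hle : ψ y ≤ ψ x
  · exact ⟨_, hconst _ (hψr y), hle, le_rfl⟩
  obtain ⟨χ, hχ, hχx, hχy⟩ := hind x y fun hyx => hle (hψ hyx)
  refine ⟨_, hmin _ (hconst _ (hψr y)) _ (hoplus _ (hconst _ (hψr x)) χ hχ), ?_, ?_⟩
  · simp only [hχx, oplus, add_zero, min_eq_left (hψr x).2]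
    exact min_le_right _ _
  · simp only [hχy, oplus, min_eq_right (le_add_of_nonneg_left (hψr x).1),
      min_eq_left (hψr y).2, le_refl]

variable [TopologicalSpace X] [CompactSpace X] [Nonempty X]

theorem exists_mem_apply_le_and_forall_sub_lt (hcont : ∀ f ∈ L, Continuous f)
    (hmax : ∀ f ∈ L, ∀ g ∈ L, (fun x => max (f x) (g x)) ∈ L)
    {ψ : X → ℝ} (hψ : Continuous ψ) {ε : ℝ} (hε : 0 < ε) {x : X}
    (happrox : ∀ y, ∃ g ∈ L, g x ≤ ψ x ∧ ψ y ≤ g y) :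
    ∃ h ∈ L, h x ≤ ψ x ∧ ∀ z, ψ z - ε < h z := by
  choose g hg hgx hgy using happrox
  obtain ⟨t, ht⟩ := exists_finset_forall_exists_lt (u := fun _ z => ψ z - ε) (v := g)
    (fun _ => by fun_prop) (fun y => hcont _ (hg y)) fun z => by linarith [hgy z]
  have hne : t.Nonempty := let ⟨y, hy, _⟩ := ht (Classical.arbitrary X); ⟨y, hy⟩
  refine ⟨t.sup' hne g, t.sup'_mem L hmax hne g fun y _ => hg y, ?_, fun z => ?_⟩
  · rw [Finset.sup'_apply]
    exact Finset.sup'_le _ _ fun y _ => hgx y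
  · rw [Finset.sup'_apply, Finset.lt_sup'_iff]
    exact ht z

theorem exists_mem_forall_abs_sub_le (hcont : ∀ f ∈ L, Continuous f)
    (hmax : ∀ f ∈ L, ∀ g ∈ L, (fun x => max (f x) (g x)) ∈ L)
    (hmin : ∀ f ∈ L, ∀ g ∈ L, (fun x => min (f x) (g x)) ∈ L)
    {ψ : X → ℝ} (hψ : Continuous ψ) {ε : ℝ} (hε : 0 < ε)
    (happrox : ∀ x y, ∃ g ∈ L, g x ≤ ψ x ∧ ψ y ≤ g y) :
    ∃ φ ∈ L, ∀ x, |ψ x - φ x| ≤ ε := by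
  choose h hh hhx hhlow using fun x =>
    exists_mem_apply_le_and_forall_sub_lt hcont hmax hψ hε (happrox x)
  obtain ⟨t, ht⟩ := exists_finset_forall_exists_lt (u := h) (v := fun _ z => ψ z + ε)
    (fun x => hcont _ (hh x)) (fun _ => by fun_prop) fun z => by linarith [hhx z]
  have hne : t.Nonempty := let ⟨x, hx, _⟩ := ht (Classical.arbitrary X); ⟨x, hx⟩
  refine ⟨t.inf' hne h, t.inf'_mem L hmin hne h fun x _ => hh x, fun z => ?_⟩
  have hlow : ψ z - ε < t.inf' hne h z := by
    rw [Finset.inf'_apply, Finset.lt_inf'_iff]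
    exact fun x _ => hhlow x z
  have hhigh : t.inf' hne h z < ψ z + ε := by
    obtain ⟨x, hx, hzx⟩ := ht z
    rw [Finset.inf'_apply]
    exact (Finset.inf'_le _ hx).trans_lt hzx
  rw [abs_le]
  constructor <;> linarith

end OrderedStoneWeierstrass

theorem ordered_stone_weierstrass_general {X : Type*} [TopologicalSpace X] [Preorder X]
    [CompactSpace X] (L : Set (X → ℝ))
    (hcont : ∀ f ∈ L, Continuous f)
    (hrange : ∀ f ∈ L, ∀ x, f x ∈ Icc (0:ℝ) 1)
    (hmax : ∀ f ∈ L, ∀ g ∈ L, (fun x => max (f x) (g x)) ∈ L)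
    (hmin : ∀ f ∈ L, ∀ g ∈ L, (fun x => min (f x) (g x)) ∈ L)
    (hoplus : ∀ f ∈ L, ∀ g ∈ L, (fun x => oplus (f x) (g x)) ∈ L)
    (hodot : ∀ f ∈ L, ∀ g ∈ L, (fun x => odot (f x) (g x)) ∈ L)
    (hconst : ∀ c ∈ Icc (0:ℝ) 1, (fun _ : X => c) ∈ L)
    (hsep : ∀ x y : X, ¬ y ≤ x → ∃ φ ∈ L, φ x < φ y) :
    ∀ ψ : X → ℝ, Monotone ψ → Continuous ψ → (∀ x, ψ x ∈ Icc (0:ℝ) 1) →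
      ∀ ε > (0:ℝ), ∃ φ ∈ L, ∀ x, |ψ x - φ x| ≤ ε := by
  intro ψ hψm hψc hψr ε hε
  rcases isEmpty_or_nonempty X with hX | hX
  · exact ⟨_, hconst 0 ⟨le_rfl, zero_le_one⟩, isEmptyElim⟩
  have hind : ∀ x y : X, ¬ y ≤ x → ∃ χ ∈ L, χ x = 0 ∧ χ y = 1 := fun x y hxy =>
    let ⟨φ, hφ, hlt⟩ := hsep x y hxy
    exists_mem_apply_eq_zero_apply_eq_one hrange hoplus hodot hconst hφ hlt
  exact exists_mem_forall_abs_sub_le hcont hmax hmin hψc hε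
    (exists_mem_apply_le_and_le_apply_of_monotone hmin hoplus hconst hind hψm hψr)

/-- Ordered Stone–Weierstrass theorem. -/
theorem ordered_stone_weierstrass {X : Type*} [TopologicalSpace X] [Preorder X]
    [CompactSpace X] (L : Set (X → ℝ))
    (hmono : ∀ f ∈ L, Monotone f)
    (hcont : ∀ f ∈ L, Continuous f)
    (hrange : ∀ f ∈ L, ∀ x, f x ∈ Icc (0:ℝ) 1)
    (hmax : ∀ f ∈ L, ∀ g ∈ L, (fun x => max (f x) (g x)) ∈ L)
    (hmin : ∀ f ∈ L, ∀ g ∈ L, (fun x => min (f x) (g x)) ∈ L)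
    (hoplus : ∀ f ∈ L, ∀ g ∈ L, (fun x => oplus (f x) (g x)) ∈ L)
    (hodot : ∀ f ∈ L, ∀ g ∈ L, (fun x => odot (f x) (g x)) ∈ L)
    (hconst : ∀ c ∈ Icc (0:ℝ) 1, (fun _ : X => c) ∈ L)
    (hsep : ∀ x y : X, ¬ y ≤ x → ∃ φ ∈ L, φ x < φ y) :
    ∀ ψ : X → ℝ, Monotone ψ → Continuous ψ → (∀ x, ψ x ∈ Icc (0:ℝ) 1) →
      ∀ ε > (0:ℝ), ∃ φ ∈ L, ∀ x, |ψ x - φ x| ≤ ε :=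
  ordered_stone_weierstrass_general L hcont hrange hmax hmin hoplus hodot hconst hsep
end
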